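/- (Sub-Milne bound under a pointwise strong-energy-type condition; the paper's remark that a model with nonnegative effective deceleration obeys the Milne upper bound.) Let λ_e ≤ λ_O be reals and E_O > 0. Let z, 𝕳, 𝕼, d_A, F : ℝ → ℝ satisfy on [λ_e, λ_O]: z differentiable with z' = −E_O(1+z)²𝕳, z(λ_O)=0, 1+z > 0; 𝕳 differentiable with 𝕳' = −E_O(1+z)𝕳²(1+𝕼) and 𝕳_O := 𝕳(λ_O) > 0; 𝕼𝕳² continuous; d_A twice differentiable with d_A'' = −F·d_A, F ≥ 0, d_A ≥ 0, d_A(λ_O)=0, d_A'(λ_O)=−E_O. If 𝕼(λ) ≥ 0 for all λ ∈ [λ_e, λ_O], then for every λ ∈ [λ_e, λ_O]: 𝕳_O · d_A(λ) ≤ (1/2)·(1 − (1+z(λ))^{−2}). -/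

import Mathlib

/-!
Put `G = 𝕳_O d_A' + E_O 𝕳/(1+z)`. The redshift equation makes `𝕳/(1+z)` decrease at rate
`E_O 𝕳² 𝕼`, so with focusing `G' = -𝕳_O F d_A - E_O² 𝕳² 𝕼 ≤ 0`; since `G` vanishes at the vertex,
`G ≥ 0` before it. But `G` is exactly the derivative of `𝕳_O d_A - (1 - (1+z)⁻²)/2`, which also
vanishes at the vertex, so this difference is `≤ 0` along the ray.
-/

open Set

theorem monotoneOn_of_hasDerivAt_nonneg {D : Set ℝ} (hD : Convex ℝ D) {f f' : ℝ → ℝ}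
    (hf : ∀ x ∈ D, HasDerivAt f (f' x) x) (hf' : ∀ x ∈ D, 0 ≤ f' x) : MonotoneOn f D :=
  monotoneOn_of_hasDerivWithinAt_nonneg hD
    (fun x hx => (hf x hx).continuousAt.continuousWithinAt)
    (fun x hx => (hf x (interior_subset hx)).hasDerivWithinAt)
    (fun x hx => hf' x (interior_subset hx))

theorem antitoneOn_of_hasDerivAt_nonpos {D : Set ℝ} (hD : Convex ℝ D) {f f' : ℝ → ℝ}
    (hf : ∀ x ∈ D, HasDerivAt f (f' x) x) (hf' : ∀ x ∈ D, f' x ≤ 0) : AntitoneOn f D :=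
  antitoneOn_of_hasDerivWithinAt_nonpos hD
    (fun x hx => (hf x hx).continuousAt.continuousWithinAt)
    (fun x hx => (hf x (interior_subset hx)).hasDerivWithinAt)
    (fun x hx => hf' x (interior_subset hx))

noncomputable def milneDistance (z : ℝ) : ℝ := (1 - ((1 + z) ^ 2)⁻¹) / 2

section RedshiftEquation

variable {z H : ℝ → ℝ} {EO lam : ℝ}

theorem hasDerivAt_milneDistance_comp
    (hz : HasDerivAt z (-EO * (1 + z lam) ^ 2 * H lam) lam) (hne : 1 + z lam ≠ 0) :
    HasDerivAt (fun l => milneDistance (z l)) (-EO * (H lam / (1 + z lam))) lam := by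
  have h := (((hz.const_add 1).pow 2).inv (pow_ne_zero 2 hne)).const_sub 1 |>.div_const 2
  refine h.congr_deriv ?_
  simp only [Pi.pow_apply]
  field_simp
  ring

theorem hasDerivAt_hubble_div_one_add_redshift {Q : ℝ → ℝ}
    (hz : HasDerivAt z (-EO * (1 + z lam) ^ 2 * H lam) lam)
    (hH : HasDerivAt H (-EO * (1 + z lam) * H lam ^ 2 * (1 + Q lam)) lam)
    (hne : 1 + z lam ≠ 0) :
    HasDerivAt (fun l => H l / (1 + z l)) (-EO * H lam ^ 2 * Q lam) lam := by
  refine (hH.div (hz.const_add 1) hne).congr_deriv ?_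
  field_simp
  ring

end RedshiftEquation

theorem sub_Milne_dimming_pointwise_general
    (lamE lamO : ℝ)
    (EO : ℝ)
    (z H Q dA dA' F : ℝ → ℝ)
    (hz : ∀ lam ∈ Set.Icc lamE lamO,
      HasDerivAt z (-EO * (1 + z lam) ^ 2 * H lam) lam)
    (hzO : z lamO = 0)
    (hzpos : ∀ lam ∈ Set.Icc lamE lamO, 0 < 1 + z lam)
    (hH : ∀ lam ∈ Set.Icc lamE lamO,
      HasDerivAt H (-EO * (1 + z lam) * (H lam) ^ 2 * (1 + Q lam)) lam)
    (hHO : 0 < H lamO)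
    (hdA : ∀ lam ∈ Set.Icc lamE lamO, HasDerivAt dA (dA' lam) lam)
    (hfocus : ∀ lam ∈ Set.Icc lamE lamO, HasDerivAt dA' (-(F lam) * dA lam) lam)
    (hFpos : ∀ lam ∈ Set.Icc lamE lamO, 0 ≤ F lam)
    (hdApos : ∀ lam ∈ Set.Icc lamE lamO, 0 ≤ dA lam)
    (hvertex : dA lamO = 0)
    (hslope : dA' lamO = -EO)
    (hQpos : ∀ lam ∈ Set.Icc lamE lamO, 0 ≤ Q lam) :
    ∀ lam ∈ Set.Icc lamE lamO,
      H lamO * dA lam ≤ (1 - ((1 + z lam) ^ 2)⁻¹) / 2 := by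
  intro lam hlam
  have hO : lamO ∈ Icc lamE lamO := ⟨hlam.1.trans hlam.2, le_rfl⟩
  have hne : ∀ l ∈ Icc lamE lamO, 1 + z l ≠ 0 := fun l hl => (hzpos l hl).ne'
  have hG : ∀ l ∈ Icc lamE lamO, 0 ≤ H lamO * dA' l + EO * (H l / (1 + z l)) := by
    intro l hl
    have hanti := antitoneOn_of_hasDerivAt_nonpos (convex_Icc lamE lamO)
      (fun x hx => ((hfocus x hx).const_mul (H lamO)).add
        ((hasDerivAt_hubble_div_one_add_redshift (hz x hx) (hH x hx) (hne x hx)).const_mul EO))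
      (fun x hx => by
        have hF := mul_nonneg hHO.le (mul_nonneg (hFpos x hx) (hdApos x hx))
        have hQ := mul_nonneg (mul_nonneg (sq_nonneg EO) (sq_nonneg (H x))) (hQpos x hx)
        linarith)
    have hGO := hanti hl hO hl.2
    simp only [Pi.add_apply, hslope, hzO, add_zero, div_one] at hGO
    linarith
  have hmono := monotoneOn_of_hasDerivAt_nonneg (convex_Icc lamE lamO)
    (fun x hx => ((hdA x hx).const_mul (H lamO)).sub
      (hasDerivAt_milneDistance_comp (hz x hx) (hne x hx)))
    (fun x hx => by simpa using hG x hx)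
  simpa [milneDistance, hvertex, hzO] using hmono hlam hO hlam.2

/-- Sub-Milne bound under a pointwise strong-energy-type condition: if the
effective deceleration parameter satisfies `𝕼 ≥ 0` along the null ray (with
the null energy condition and `𝕳_O > 0`), then the angular diameter distance
obeys the Milne upper bound `𝕳_O d_A ≤ (1 − (1+z)⁻²)/2` at every point of the
ray. -/
theorem sub_Milne_dimming_pointwise
    (lamE lamO : ℝ) (hle : lamE ≤ lamO)
    (EO : ℝ) (hEO : 0 < EO)
    (z H Q dA dA' F : ℝ → ℝ)
    (hz : ∀ lam ∈ Set.Icc lamE lamO,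
      HasDerivAt z (-EO * (1 + z lam) ^ 2 * H lam) lam)
    (hzO : z lamO = 0)
    (hzpos : ∀ lam ∈ Set.Icc lamE lamO, 0 < 1 + z lam)
    (hH : ∀ lam ∈ Set.Icc lamE lamO,
      HasDerivAt H (-EO * (1 + z lam) * (H lam) ^ 2 * (1 + Q lam)) lam)
    (hHO : 0 < H lamO)
    (hQH : ContinuousOn (fun lam => Q lam * (H lam) ^ 2) (Set.Icc lamE lamO))
    (hdA : ∀ lam ∈ Set.Icc lamE lamO, HasDerivAt dA (dA' lam) lam)
    (hfocus : ∀ lam ∈ Set.Icc lamE lamO, HasDerivAt dA' (-(F lam) * dA lam) lam)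
    (hFpos : ∀ lam ∈ Set.Icc lamE lamO, 0 ≤ F lam)
    (hdApos : ∀ lam ∈ Set.Icc lamE lamO, 0 ≤ dA lam)
    (hvertex : dA lamO = 0)
    (hslope : dA' lamO = -EO)
    (hQpos : ∀ lam ∈ Set.Icc lamE lamO, 0 ≤ Q lam) :
    ∀ lam ∈ Set.Icc lamE lamO,
      H lamO * dA lam ≤ (1 - ((1 + z lam) ^ 2)⁻¹) / 2 :=
  sub_Milne_dimming_pointwise_general lamE lamO EO z H Q dA dA' F hz hzO hzpos hH hHO hdA hfocus
    hFpos hdApos hvertex hslope hQpos
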